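/- Let A ∈ ℝ^{n×N} have full row rank and let x ∈ ℝ^N be s-sparse with Ax = b. Let γ be a (3s)-th order P-RIP constant for A with γ < 1/2. Suppose the sequences {x^k}, {u^k} satisfy: u^k is a best s-term approximation of x^k and x^{k+1} = u^k + A*(AA*)^{-1}(b − A u^k) for all k ≥ 0. Then u^k converges to x as k → ∞. -/

import Mathlib

open Matrix Finset Filter Topology

/-- Euclidean norm of a vector. -/
noncomputable def euclNorm {k : ℕ} (x : Fin k → ℝ) : ℝ := Real.sqrt (∑ i, x i ^ 2)

/-- `x` has at most `s` nonzero entries. -/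
def IsSparse {k : ℕ} (s : ℕ) (x : Fin k → ℝ) : Prop :=
  (Finset.univ.filter fun i => x i ≠ 0).card ≤ s

/-- Spectral norm (ℓ²-operator norm) of a matrix. -/
noncomputable def specNorm {m k : Type*} [Fintype m] [Fintype k] [DecidableEq k]
    (M : Matrix m k ℝ) : ℝ :=
  ‖LinearMap.toContinuousLinearMap (Matrix.toEuclideanLin M)‖

/-- `cols A T` is the submatrix of `A` consisting of the columns indexed by `T`. -/
def cols {n N : ℕ} (A : Matrix (Fin n) (Fin N) ℝ) (T : Finset (Fin N)) :
    Matrix (Fin n) {i : Fin N // i ∈ T} ℝ := Matrix.of fun r c => A r c.1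

/-- `subv x T` is the subvector of `x` consisting of the entries indexed by `T`. -/
def subv {N : ℕ} (x : Fin N → ℝ) (T : Finset (Fin N)) : {i : Fin N // i ∈ T} → ℝ :=
  fun i => x i.1

/-- The feedback term `(A_T* A_T)⁻¹ A_T* A_{Tᶜ} x_{Tᶜ}`. -/
noncomputable def fb {n N : ℕ} (A : Matrix (Fin n) (Fin N) ℝ) (T : Finset (Fin N))
    (x : Fin N → ℝ) : {i : Fin N // i ∈ T} → ℝ :=
  ((cols A T)ᵀ * cols A T)⁻¹ *ᵥ ((cols A T)ᵀ *ᵥ (cols A Tᶜ *ᵥ subv x Tᶜ))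

/-- The positive semidefinite square root of a positive semidefinite matrix
(Mathlib's former `Matrix.PosSemidef.sqrt`, removed since). -/
noncomputable def Matrix.PosSemidef.sqrt {n : Type*} [Fintype n] [DecidableEq n]
    {A : Matrix n n ℝ} (hA : A.PosSemidef) : Matrix n n ℝ :=
  hA.1.eigenvectorUnitary.1 * diagonal ((↑) ∘ Real.sqrt ∘ hA.1.eigenvalues) *
    (star hA.1.eigenvectorUnitary : Matrix n n ℝ)

/-!
Write `M = (AA*)^{-1/2} A`. Then `MM* = 1` and `M*M = A*(AA*)^{-1}A` is the orthogonal projection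
onto the row space of `A`, so `x^{k+1} = u^k + M*M (x - u^k)` and `x - x^{k+1} = (1 - M*M)(x - u^k)`.
For the `2s`-sparse error `e = x - u^k` the P-RIP gives `‖(1 - M*M) e‖² = ‖e‖² - ‖Me‖² ≤ γ ‖e‖²`.
On the other hand `M x = M x^{k+1}`, so, `u^{k+1}` being a best `s`-term approximation of `x^{k+1}`,
`(1 - γ) ‖u^{k+1} - x‖² ≤ ‖M (u^{k+1} - x^{k+1})‖² ≤ ‖u^{k+1} - x^{k+1}‖² ≤ ‖x - x^{k+1}‖²`.
Hence `‖u^k - x‖²` decays geometrically with ratio `γ / (1 - γ) < 1`.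
-/

lemma euclNorm_nonneg {k : ℕ} (x : Fin k → ℝ) : 0 ≤ euclNorm x := Real.sqrt_nonneg _

lemma euclNorm_sq {k : ℕ} (x : Fin k → ℝ) : euclNorm x ^ 2 = x ⬝ᵥ x := by
  rw [euclNorm, Real.sq_sqrt (by positivity)]
  simp only [dotProduct, sq]

lemma euclNorm_eq_norm_toLp {k : ℕ} (x : Fin k → ℝ) :
    euclNorm x = ‖(WithLp.toLp 2 x : EuclideanSpace ℝ (Fin k))‖ := by
  simp only [euclNorm, EuclideanSpace.norm_eq, Real.norm_eq_abs, sq_abs]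

lemma tendsto_of_tendsto_euclNorm_sub {k : ℕ} {u : ℕ → Fin k → ℝ} {x : Fin k → ℝ}
    (h : Tendsto (fun j => euclNorm (u j - x)) atTop (𝓝 0)) : Tendsto u atTop (𝓝 x) := by
  have hLp : Tendsto (fun j => (WithLp.toLp 2 (u j) : EuclideanSpace ℝ (Fin k))) atTop
      (𝓝 (WithLp.toLp 2 x)) := by
    rw [tendsto_iff_norm_sub_tendsto_zero]
    simpa only [euclNorm_eq_norm_toLp, WithLp.toLp_sub] using h
  exact ((PiLp.continuous_ofLp 2 _).tendsto _).comp hLp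

lemma tendsto_zero_of_le_mul_of_lt_one {E : ℕ → ℝ} {ρ : ℝ} (hE : ∀ k, 0 ≤ E k) (hρ0 : 0 ≤ ρ)
    (hρ1 : ρ < 1) (h : ∀ k, E (k + 1) ≤ ρ * E k) : Tendsto E atTop (𝓝 0) := by
  have hgeom : Tendsto (fun k => ρ ^ k * E 0) atTop (𝓝 0) := by
    simpa using (tendsto_pow_atTop_nhds_zero_of_lt_one hρ0 hρ1).mul_const (E 0)
  exact tendsto_of_tendsto_of_tendsto_of_le_of_le tendsto_const_nhds hgeom hE
    fun k => le_geom hρ0 k fun j _ => h j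

lemma IsSparse.sub {k s t : ℕ} {x y : Fin k → ℝ} (hx : IsSparse s x) (hy : IsSparse t y) :
    IsSparse (s + t) (x - y) := by
  have hsupp : (univ.filter fun i => (x - y) i ≠ 0) ⊆
      (univ.filter fun i => x i ≠ 0) ∪ (univ.filter fun i => y i ≠ 0) := by
    intro i
    simp only [mem_filter, mem_union, mem_univ, true_and, Pi.sub_apply]
    contrapose!
    rintro ⟨hxi, hyi⟩
    rw [hxi, hyi, sub_zero]
  exact (card_le_card hsupp).trans ((card_union_le _ _).trans (add_le_add hx hy))

namespace Matrix.PosSemidef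

variable {m : Type*} [Fintype m] [DecidableEq m] {B : Matrix m m ℝ}

lemma sqrt_mul_self (hB : B.PosSemidef) : hB.sqrt * hB.sqrt = B := by
  have hU : (star hB.1.eigenvectorUnitary : Matrix m m ℝ) * hB.1.eigenvectorUnitary.1 = 1 :=
    Unitary.coe_star_mul_self _
  have hD : diagonal ((↑) ∘ Real.sqrt ∘ hB.1.eigenvalues) *
      diagonal ((↑) ∘ Real.sqrt ∘ hB.1.eigenvalues) =
      diagonal (RCLike.ofReal ∘ hB.1.eigenvalues : m → ℝ) := by
    rw [diagonal_mul_diagonal]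
    congr 1
    funext i
    simp [Real.mul_self_sqrt (hB.eigenvalues_nonneg i)]
  conv_rhs => rw [hB.1.spectral_theorem, Unitary.conjStarAlgAut_apply]
  rw [sqrt, ← hD]
  simp only [Matrix.mul_assoc]
  rw [← Matrix.mul_assoc (star _ : Matrix m m ℝ) _ _, hU, Matrix.one_mul]

lemma transpose_sqrt (hB : B.PosSemidef) : hB.sqrtᵀ = hB.sqrt := by
  rw [sqrt, ← conjTranspose_eq_transpose_of_trivial, ← star_eq_conjTranspose, star_mul, star_mul,
    star_star, Matrix.mul_assoc, star_eq_conjTranspose, (isHermitian_diagonal _).eq]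

end Matrix.PosSemidef

section Whitening

variable {m k : Type*} [Fintype m] [DecidableEq m] [Fintype k]

/-- The matrix `(AA*)^{-1/2} A` of the paper. -/
noncomputable def whiten (A : Matrix m k ℝ) (hpd : (A * Aᵀ).PosDef) : Matrix m k ℝ :=
  hpd.posSemidef.sqrt⁻¹ * A

variable {A : Matrix m k ℝ} (hpd : (A * Aᵀ).PosDef)

lemma transpose_whiten : (whiten A hpd)ᵀ = Aᵀ * hpd.posSemidef.sqrt⁻¹ := by
  rw [whiten, transpose_mul, transpose_nonsing_inv, PosSemidef.transpose_sqrt]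

lemma whiten_mul_transpose : whiten A hpd * (whiten A hpd)ᵀ = 1 := by
  have hSS := PosSemidef.sqrt_mul_self hpd.posSemidef
  have hdet : IsUnit (A * Aᵀ).det := hpd.det_pos.ne'.isUnit
  rw [transpose_whiten, whiten]
  generalize hpd.posSemidef.sqrt = S at hSS ⊢
  have hS : IsUnit S.det := isUnit_of_mul_isUnit_left (by rwa [← det_mul, hSS])
  rw [Matrix.mul_assoc, ← Matrix.mul_assoc A, ← hSS, Matrix.mul_assoc S, mul_nonsing_inv S hS,
    Matrix.mul_one, nonsing_inv_mul S hS]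

lemma transpose_whiten_mul_whiten : (whiten A hpd)ᵀ * whiten A hpd = Aᵀ * (A * Aᵀ)⁻¹ * A := by
  have hSS := PosSemidef.sqrt_mul_self hpd.posSemidef
  rw [transpose_whiten, whiten]
  generalize hpd.posSemidef.sqrt = S at hSS ⊢
  rw [← hSS, Matrix.mul_inv_rev]
  simp only [Matrix.mul_assoc]

end Whitening

section Coisometry

variable {m k : Type*} [Fintype m] [DecidableEq m] [Fintype k] {M : Matrix m k ℝ}

lemma dotProduct_sub_transpose_mulVec_mulVec_self (hM : M * Mᵀ = 1) (w : k → ℝ) :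
    (w - Mᵀ *ᵥ (M *ᵥ w)) ⬝ᵥ (w - Mᵀ *ᵥ (M *ᵥ w)) = w ⬝ᵥ w - (M *ᵥ w) ⬝ᵥ (M *ᵥ w) := by
  set q := M *ᵥ w
  have hwq : w ⬝ᵥ (Mᵀ *ᵥ q) = q ⬝ᵥ q := by
    rw [dotProduct_mulVec, vecMul_transpose, dotProduct_comm]
  have hqq : (Mᵀ *ᵥ q) ⬝ᵥ (Mᵀ *ᵥ q) = q ⬝ᵥ q := by
    rw [dotProduct_mulVec, vecMul_transpose, mulVec_mulVec, hM, one_mulVec, dotProduct_comm]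
  simp only [sub_dotProduct, dotProduct_sub, hwq, hqq, dotProduct_comm _ w]
  ring

lemma mulVec_dotProduct_self_le (hM : M * Mᵀ = 1) (w : k → ℝ) :
    (M *ᵥ w) ⬝ᵥ (M *ᵥ w) ≤ w ⬝ᵥ w := by
  have hnonneg := dotProduct_self_star_nonneg (w - Mᵀ *ᵥ (M *ᵥ w))
  rw [star_trivial, dotProduct_sub_transpose_mulVec_mulVec_self hM] at hnonneg
  linarith

end Coisometry

lemma contraction_of_rip {n N s : ℕ} {M : Matrix (Fin n) (Fin N) ℝ} (hM : M * Mᵀ = 1) {γ : ℝ}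
    (hRIP : ∀ z : Fin N → ℝ, IsSparse (2 * s) z → (1 - γ) * euclNorm z ^ 2 ≤ euclNorm (M *ᵥ z) ^ 2)
    {x u u' : Fin N → ℝ} (hx : IsSparse s x) (hu : IsSparse s u) (hu' : IsSparse s u')
    (hbest : euclNorm (u' - (u + Mᵀ *ᵥ (M *ᵥ (x - u)))) ≤
      euclNorm (x - (u + Mᵀ *ᵥ (M *ᵥ (x - u))))) :
    (1 - γ) * euclNorm (u' - x) ^ 2 ≤ γ * euclNorm (u - x) ^ 2 := by
  set e := x - u
  set w := u + Mᵀ *ᵥ (M *ᵥ e)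
  have hMw : M *ᵥ w = M *ᵥ x := by
    rw [mulVec_add, mulVec_mulVec, hM, one_mulVec, mulVec_sub]
    abel
  have hxw : x - w = e - Mᵀ *ᵥ (M *ᵥ e) := by
    simp only [w, e]
    abel
  have he : euclNorm (u - x) ^ 2 = euclNorm e ^ 2 := by
    rw [euclNorm_sq, euclNorm_sq, ← neg_sub, neg_dotProduct, dotProduct_neg, neg_neg]
  have hsparse : ∀ {y z : Fin N → ℝ}, IsSparse s y → IsSparse s z → IsSparse (2 * s) (y - z) :=
    fun hy hz => two_mul s ▸ hy.sub hz
  calc (1 - γ) * euclNorm (u' - x) ^ 2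
      ≤ euclNorm (M *ᵥ (u' - x)) ^ 2 := hRIP _ (hsparse hu' hx)
    _ = (M *ᵥ (u' - w)) ⬝ᵥ (M *ᵥ (u' - w)) := by rw [euclNorm_sq, mulVec_sub, mulVec_sub, hMw]
    _ ≤ euclNorm (u' - w) ^ 2 := (mulVec_dotProduct_self_le hM _).trans (euclNorm_sq _).ge
    _ ≤ euclNorm (x - w) ^ 2 := pow_le_pow_left₀ (euclNorm_nonneg _) hbest 2
    _ = euclNorm e ^ 2 - euclNorm (M *ᵥ e) ^ 2 := by
      rw [hxw, euclNorm_sq, euclNorm_sq, euclNorm_sq, dotProduct_sub_transpose_mulVec_mulVec_self hM]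
    _ ≤ γ * euclNorm (u - x) ^ 2 := by rw [he]; linarith [hRIP e (hsparse hx hu)]

theorem stmt_6_general {n N s : ℕ} (A : Matrix (Fin n) (Fin N) ℝ)
    (hpd : (A * Aᵀ).PosDef)
    (x : Fin N → ℝ) (hx : IsSparse s x) (b : Fin n → ℝ) (hb : A *ᵥ x = b)
    (γ : ℝ) (hγ0 : 0 ≤ γ) (hγ : γ < 1/2)
    (hPRIP : ∀ z : Fin N → ℝ, IsSparse (3*s) z →
      (1 - γ) * euclNorm z ^ 2 ≤ euclNorm ((hpd.posSemidef.sqrt)⁻¹ *ᵥ (A *ᵥ z)) ^ 2)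
    (xk u : ℕ → Fin N → ℝ)
    (hus : ∀ k, IsSparse s (u k))
    (hub : ∀ k, ∀ z : Fin N → ℝ, IsSparse s z → euclNorm (u k - xk k) ≤ euclNorm (z - xk k))
    (hxk : ∀ k, xk (k+1) = u k + Aᵀ *ᵥ ((A * Aᵀ)⁻¹ *ᵥ (b - A *ᵥ u k))) :
    Filter.Tendsto u Filter.atTop (nhds x) := by
  set M := whiten A hpd
  have hRIP : ∀ z, IsSparse (2 * s) z → (1 - γ) * euclNorm z ^ 2 ≤ euclNorm (M *ᵥ z) ^ 2 :=
    fun z hz => by simpa only [M, whiten, ← mulVec_mulVec] using hPRIP z (hz.trans (by omega))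
  have hstep : ∀ k, xk (k + 1) = u k + Mᵀ *ᵥ (M *ᵥ (x - u k)) := fun k => by
    rw [hxk, ← hb, ← mulVec_sub, mulVec_mulVec, mulVec_mulVec, mulVec_mulVec,
      transpose_whiten_mul_whiten, Matrix.mul_assoc]
  have h1γ : 0 < 1 - γ := by linarith
  have hdecay : ∀ k, euclNorm (u (k + 1) - x) ^ 2 ≤ γ / (1 - γ) * euclNorm (u k - x) ^ 2 :=
    fun k => by
      rw [div_mul_eq_mul_div, le_div_iff₀ h1γ, mul_comm]
      exact contraction_of_rip (whiten_mul_transpose hpd) hRIP hx (hus k) (hus (k + 1))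
        (hstep k ▸ hub (k + 1) x hx)
  have hsq := tendsto_zero_of_le_mul_of_lt_one (E := fun k => euclNorm (u k - x) ^ 2)
    (fun k => sq_nonneg _) (div_nonneg hγ0 h1γ.le)
    ((div_lt_one h1γ).2 (by linarith)) hdecay
  apply tendsto_of_tendsto_euclNorm_sub
  simpa only [Real.sqrt_sq (euclNorm_nonneg _), Real.sqrt_zero] using hsq.sqrt

/-- NST+HT converges to the exact sparse solution under the P-RIP. -/
theorem stmt_6 {n N s : ℕ} (hnN : n < N) (A : Matrix (Fin n) (Fin N) ℝ)
    (hpd : (A * Aᵀ).PosDef)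
    (x : Fin N → ℝ) (hx : IsSparse s x) (b : Fin n → ℝ) (hb : A *ᵥ x = b)
    (γ : ℝ) (hγ0 : 0 ≤ γ) (hγ : γ < 1/2)
    (hPRIP : ∀ z : Fin N → ℝ, IsSparse (3*s) z →
      (1 - γ) * euclNorm z ^ 2 ≤ euclNorm ((hpd.posSemidef.sqrt)⁻¹ *ᵥ (A *ᵥ z)) ^ 2)
    (xk u : ℕ → Fin N → ℝ)
    (hus : ∀ k, IsSparse s (u k))
    (hub : ∀ k, ∀ z : Fin N → ℝ, IsSparse s z → euclNorm (u k - xk k) ≤ euclNorm (z - xk k))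
    (hxk : ∀ k, xk (k+1) = u k + Aᵀ *ᵥ ((A * Aᵀ)⁻¹ *ᵥ (b - A *ᵥ u k))) :
    Filter.Tendsto u Filter.atTop (nhds x) :=
  stmt_6_general A hpd x hx b hb γ hγ0 hγ hPRIP xk u hus hub hxk
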